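/- arXiv:2011.03631 — 3 statements merged into one kernel-verified Lean document; each statement's English description precedes it below -/
import Mathlib

section
/- Let x = [x₁, x₂]ᵀ ∈ ℍ² with x₂ ≠ 0 and ‖x‖₂ = √(|x₁|² + |x₂|²). Define q₁₁ = x₁/‖x‖₂ and q₂₁ = x₂/‖x‖₂, and in the case |x₁| ≤ |x₂| define q₁₂ = |q₂₁| and q₂₂ = -|q₂₁| (q₂₁)^{-H} (q₁₁)^H (where y^{-H} denotes the conjugate of the inverse). Then the matrix G = [[q₁₁, q₁₂], [q₂₁, q₂₂]] satisfies G^H x = [‖x‖₂, 0]ᵀ. -/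
open Quaternion Matrix

theorem generalized_givens_annihilates (x₁ x₂ : Quaternion ℝ) (hx₂ : x₂ ≠ 0)
    (hcase : ‖x₁‖ ≤ ‖x₂‖) :
    let r : ℝ := Real.sqrt (‖x₁‖ ^ 2 + ‖x₂‖ ^ 2)
    let q₁₁ : Quaternion ℝ := x₁ / (r : Quaternion ℝ)
    let q₂₁ : Quaternion ℝ := x₂ / (r : Quaternion ℝ)
    let q₁₂ : Quaternion ℝ := ((‖q₂₁‖ : ℝ) : Quaternion ℝ)
    let q₂₂ : Quaternion ℝ := -((‖q₂₁‖ : ℝ) : Quaternion ℝ) * star q₂₁⁻¹ * star q₁₁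
    let G : Matrix (Fin 2) (Fin 2) (Quaternion ℝ) := !![q₁₁, q₁₂; q₂₁, q₂₂]
    Gᴴ.mulVec ![x₁, x₂] = ![((r : ℝ) : Quaternion ℝ), 0] := by
  intro r q₁₁ q₂₁ q₁₂ q₂₂ G
  have hx₂n : 0 < ‖x₂‖ := norm_pos_iff.2 hx₂
  have hr : 0 < r := Real.sqrt_pos.2 (by positivity)
  have hrne : (r : ℝ) ≠ 0 := ne_of_gt hr
  have hrq : ((r : ℝ) : Quaternion ℝ) ≠ 0 :=
    (Quaternion.coe_injective.ne_iff).2 hrne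
  have hr2 : r ^ 2 = ‖x₁‖ ^ 2 + ‖x₂‖ ^ 2 := Real.sq_sqrt (by positivity)
  have hq21 : q₂₁ ≠ 0 := div_ne_zero hx₂ hrq
  set c : ℝ := ‖q₂₁‖ with hc
  -- first entry
  have h1 : star q₁₁ * x₁ + star q₂₁ * x₂ = ((r : ℝ) : Quaternion ℝ) := by
    show star (x₁ / (r : Quaternion ℝ)) * x₁ + star (x₂ / (r : Quaternion ℝ)) * x₂ = _
    rw [div_eq_mul_inv, div_eq_mul_inv, StarMul.star_mul, StarMul.star_mul,
      ← Quaternion.coe_inv, Quaternion.star_coe]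
    rw [mul_assoc, mul_assoc, Quaternion.star_mul_self, Quaternion.star_mul_self,
      ← mul_add, ← Quaternion.coe_add, ← Quaternion.coe_mul]
    congr 1
    rw [Quaternion.normSq_eq_norm_mul_self, Quaternion.normSq_eq_norm_mul_self]
    field_simp
    nlinarith [hr2]
  -- key cancellation
  have hkey : q₁₁ * q₂₁⁻¹ * x₂ = x₁ := by
    show (x₁ / (r : Quaternion ℝ)) * (x₂ / (r : Quaternion ℝ))⁻¹ * x₂ = x₁
    rw [div_eq_mul_inv, div_eq_mul_inv, _root_.mul_inv_rev, inv_inv]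
    rw [mul_assoc x₁, inv_mul_cancel_left₀ hrq, mul_assoc, inv_mul_cancel₀ hx₂, mul_one]
  -- second entry
  have h2 : star q₁₂ * x₁ + star q₂₂ * x₂ = 0 := by
    have hsq : star q₂₂ = q₁₁ * q₂₁⁻¹ * (-((c : ℝ) : Quaternion ℝ)) := by
      show star (-((c : ℝ) : Quaternion ℝ) * star q₂₁⁻¹ * star q₁₁) = _
      rw [StarMul.star_mul, StarMul.star_mul, star_star, star_star, star_neg,
        Quaternion.star_coe, ← mul_assoc]
    have hsc : star q₁₂ = ((c : ℝ) : Quaternion ℝ) := Quaternion.star_coe c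
    have hcomm : Commute (-((c : ℝ) : Quaternion ℝ)) (q₁₁ * q₂₁⁻¹) :=
      (Quaternion.coe_commute c (q₁₁ * q₂₁⁻¹)).neg_left
    have hcm : q₁₁ * q₂₁⁻¹ * (-((c : ℝ) : Quaternion ℝ)) * x₂
        = -((c : ℝ) : Quaternion ℝ) * (q₁₁ * q₂₁⁻¹ * x₂) := by
      rw [← hcomm.eq, mul_assoc]
    rw [hsq, hsc, hcm, hkey, neg_mul, add_neg_cancel]
  funext i
  fin_cases i <;>
    simp only [G, Matrix.mulVec, dotProduct, Fin.sum_univ_two, conjTranspose_apply,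
      Fin.mk_zero, Fin.mk_one, Matrix.cons_val', Matrix.cons_val_zero, Matrix.cons_val_one,
      Matrix.head_cons, Matrix.empty_val', Matrix.cons_val_fin_one, Matrix.head_fin_const]
  · exact h1
  · exact h2
end

section
/- The generalized Givens matrix G of the previous construction is unitary: with q₁₁ = x₁/‖x‖₂, q₂₁ = x₂/‖x‖₂, q₁₂ = |q₂₁|, q₂₂ = -|q₂₁| (q₂₁)^{-H} (q₁₁)^H (assuming x₂ ≠ 0), the matrix G = [[q₁₁, q₁₂], [q₂₁, q₂₂]] satisfies G^H G = I₂ over ℍ. -/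
/-!
The first column `(x₁, x₂) / ‖x‖` is a unit vector. The second column is chosen so that
`star q₂₁ * q₂₂ = -|q₂₁| * star q₁₁`, which cancels `star q₁₁ * q₁₂` because real scalars are
central in `ℍ`, and `‖q₂₂‖ = ‖q₁₁‖` makes it a unit vector as well.
-/

open Quaternion Matrix

theorem Matrix.conjTranspose_fin_two {α : Type*} [Star α] (a b c d : α) :
    (!![a, b; c, d])ᴴ = !![star a, star c; star b, star d] := by
  ext i j
  fin_cases i <;> fin_cases j <;> rfl

theorem Matrix.conjTranspose_mul_self_fin_two_eq_one {α : Type*} [Semiring α] [StarRing α]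
    {a b c d : α} (h₁ : star a * a + star c * c = 1) (h₁₂ : star a * b + star c * d = 0)
    (h₂ : star b * b + star d * d = 1) : (!![a, b; c, d])ᴴ * !![a, b; c, d] = 1 := by
  have h₂₁ : star b * a + star d * c = 0 := by
    simpa only [star_add, star_mul, star_star, star_zero] using congrArg star h₁₂
  rw [conjTranspose_fin_two, mul_fin_two, h₁, h₁₂, h₂₁, h₂, one_fin_two]

namespace Quaternion

theorem star_mul_self_eq_norm_sq (q : ℍ) : star q * q = ((‖q‖ ^ 2 : ℝ) : ℍ) := by
  rw [star_mul_self, normSq_eq_norm_mul_self, sq]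

theorem norm_div_coe_sq_add_norm_div_coe_sq {x₁ x₂ : ℍ} {r : ℝ} (hr : r ≠ 0)
    (hr₂ : r ^ 2 = ‖x₁‖ ^ 2 + ‖x₂‖ ^ 2) : ‖x₁ / (r : ℍ)‖ ^ 2 + ‖x₂ / (r : ℍ)‖ ^ 2 = 1 := by
  rw [norm_div, norm_div, norm_coe, div_pow, div_pow, ← add_div, Real.norm_eq_abs, sq_abs, ← hr₂,
    div_self (pow_ne_zero 2 hr)]

theorem conjTranspose_mul_self_givens_eq_one {a c : ℍ} (hc : c ≠ 0) (h : ‖a‖ ^ 2 + ‖c‖ ^ 2 = 1) :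
    (!![a, (‖c‖ : ℍ); c, -(‖c‖ : ℍ) * star c⁻¹ * star a])ᴴ *
      !![a, (‖c‖ : ℍ); c, -(‖c‖ : ℍ) * star c⁻¹ * star a] = 1 := by
  have hc' : star c ≠ 0 := star_ne_zero.mpr hc
  have hd : ‖-(‖c‖ : ℍ) * star c⁻¹ * star a‖ = ‖a‖ := by
    rw [norm_mul, norm_mul, norm_neg, norm_star, norm_star, norm_inv, norm_coe, norm_norm,
      mul_inv_cancel₀ (norm_ne_zero_iff.mpr hc), one_mul]
  apply conjTranspose_mul_self_fin_two_eq_one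
  · rw [star_mul_self_eq_norm_sq, star_mul_self_eq_norm_sq, ← coe_add, h, coe_one]
  · rw [star_inv₀, ← coe_commutes, neg_mul, neg_mul, mul_neg, mul_assoc,
      (coe_commute _ _).symm.left_comm, mul_inv_cancel_left₀ hc', add_neg_cancel]
  · rw [star_mul_self_eq_norm_sq, star_mul_self_eq_norm_sq, hd, norm_coe, norm_norm, ← coe_add,
      add_comm, h, coe_one]

end Quaternion

theorem generalized_givens_unitary (x₁ x₂ : Quaternion ℝ) (hx₂ : x₂ ≠ 0) :
    let r : ℝ := Real.sqrt (‖x₁‖ ^ 2 + ‖x₂‖ ^ 2)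
    let q₁₁ : Quaternion ℝ := x₁ / (r : Quaternion ℝ)
    let q₂₁ : Quaternion ℝ := x₂ / (r : Quaternion ℝ)
    let q₁₂ : Quaternion ℝ := ((‖q₂₁‖ : ℝ) : Quaternion ℝ)
    let q₂₂ : Quaternion ℝ := -((‖q₂₁‖ : ℝ) : Quaternion ℝ) * star q₂₁⁻¹ * star q₁₁
    let G : Matrix (Fin 2) (Fin 2) (Quaternion ℝ) := !![q₁₁, q₁₂; q₂₁, q₂₂]
    Gᴴ * G = 1 := by
  intro r q₁₁ q₂₁ q₁₂ q₂₂ G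
  have hr : r ≠ 0 := (Real.sqrt_pos.mpr (by positivity)).ne'
  have hr₂ : r ^ 2 = ‖x₁‖ ^ 2 + ‖x₂‖ ^ 2 := Real.sq_sqrt (by positivity)
  exact conjTranspose_mul_self_givens_eq_one (div_ne_zero hx₂ (coe_injective.ne hr))
    (norm_div_coe_sq_add_norm_div_coe_sq hr hr₂)
end

section
/- Let x, y ∈ ℍⁿ be distinct quaternion vectors with ‖x‖ = ‖y‖ and y^H x ∈ ℝ. Then the quaternion Householder matrix H = I - 2uu^H with u = (y - x)/‖y - x‖ satisfies H y = x. -/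
open Quaternion Matrix

theorem quaternion_householder_maps_y_to_x (n : ℕ) (x y : Fin n → Quaternion ℝ)
    (hxy : x ≠ y)
    (hnorm : ∑ l, ‖x l‖ ^ 2 = ∑ l, ‖y l‖ ^ 2)
    (hreal : ∃ r : ℝ, ∑ l, star (y l) * x l = ((r : ℝ) : Quaternion ℝ)) :
    let d : ℝ := Real.sqrt (∑ l, ‖y l - x l‖ ^ 2)
    let u : Fin n → Quaternion ℝ := fun l => (y l - x l) / ((d : ℝ) : Quaternion ℝ)
    let H : Matrix (Fin n) (Fin n) (Quaternion ℝ) :=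
      1 - 2 • Matrix.of (fun p q => u p * star (u q))
    H.mulVec y = x := by
  obtain ⟨r, hr⟩ := hreal
  intro d u H
  have hS : 0 < ∑ l, ‖y l - x l‖ ^ 2 := by
    obtain ⟨l, hl⟩ : ∃ l, x l ≠ y l := Function.ne_iff.mp hxy
    have hl' : y l - x l ≠ 0 := sub_ne_zero.mpr (Ne.symm hl)
    exact Finset.sum_pos' (fun i _ => by positivity)
      ⟨l, Finset.mem_univ l, pow_pos (norm_pos_iff.mpr hl') 2⟩
  have hd0 : d ≠ 0 := (Real.sqrt_pos.mpr hS).ne'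
  have hd2 : d ^ 2 = ∑ l, ‖y l - x l‖ ^ 2 := Real.sq_sqrt hS.le
  have hcoesum : ∀ f : Fin n → ℝ,
      ((∑ l, f l : ℝ) : Quaternion ℝ) = ∑ l, ((f l : ℝ) : Quaternion ℝ) := by
    intro f
    rw [← Quaternion.algebraMap_def, map_sum]
  have hr' : ∑ l, star (x l) * y l = ((r : ℝ) : Quaternion ℝ) := by
    have := congrArg star hr
    simpa [star_sum, StarMul.star_mul, Quaternion.star_coe] using this
  have hA : ∀ z : Fin n → Quaternion ℝ,
      ∑ l, star (z l) * z l = ((∑ l, ‖z l‖ ^ 2 : ℝ) : Quaternion ℝ) := by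
    intro z
    rw [hcoesum]
    exact Finset.sum_congr rfl fun l _ => by
      rw [Quaternion.star_mul_self, Quaternion.normSq_eq_norm_mul_self, sq]
  have key : ∑ q, star (y q - x q) * y q = ((d ^ 2 / 2 : ℝ) : Quaternion ℝ) := by
    have e1 : ((d ^ 2 : ℝ) : Quaternion ℝ) = ∑ l, star (y l - x l) * (y l - x l) := by
      rw [hd2, ← hA]
    have e2 : ∑ l, star (y l - x l) * (y l - x l)
        = (2 : Quaternion ℝ) * ∑ q, star (y q - x q) * y q := by
      have h1 : ∀ l, star (y l - x l) * (y l - x l)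
          = (star (y l) * y l + star (x l) * x l) - (star (y l) * x l + star (x l) * y l) := by
        intro l; simp only [star_sub]; noncomm_ring
      have h2 : ∀ l, star (y l - x l) * y l = star (y l) * y l - star (x l) * y l := by
        intro l; simp only [star_sub]; noncomm_ring
      rw [Finset.sum_congr rfl fun l _ => h1 l, Finset.sum_congr rfl fun l _ => h2 l]
      simp only [Finset.sum_sub_distrib, Finset.sum_add_distrib, hr, hr', hA, hnorm]
      noncomm_ring
    have e3 : ((d ^ 2 : ℝ) : Quaternion ℝ)
        = (2 : Quaternion ℝ) * ∑ q, star (y q - x q) * y q := by rw [e1, e2]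
    have h2 : (2 : Quaternion ℝ) ≠ 0 := by
      have := Quaternion.coe_injective.ne (two_ne_zero (α := ℝ))
      norm_cast at this
    apply mul_left_cancel₀ h2
    calc (2 : Quaternion ℝ) * ∑ q, star (y q - x q) * y q
        = ((d ^ 2 : ℝ) : Quaternion ℝ) := e3.symm
      _ = ((2 * (d ^ 2 / 2) : ℝ) : Quaternion ℝ) := by
            rw [show (2 * (d ^ 2 / 2) : ℝ) = d ^ 2 from by ring]
      _ = (2 : Quaternion ℝ) * ((d ^ 2 / 2 : ℝ) : Quaternion ℝ) := by
            rw [Quaternion.coe_mul]; congr 1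
  have hu : ∀ l, u l = (d⁻¹ : ℝ) • (y l - x l) := by
    intro l
    simp only [u, div_eq_mul_inv, ← Quaternion.coe_inv, Quaternion.mul_coe_eq_smul]
  funext p
  show (H.mulVec y) p = x p
  simp only [H, Matrix.mulVec, dotProduct, Matrix.sub_apply, Matrix.smul_apply,
    Matrix.one_apply, Matrix.of_apply, sub_mul, Finset.sum_sub_distrib,
    ite_mul, one_mul, zero_mul, Finset.sum_ite_eq, Finset.mem_univ, if_true,
    smul_mul_assoc]
  have step : ∀ q, u p * star (u q) * y q
      = (d⁻¹ * d⁻¹) • ((y p - x p) * (star (y q - x q) * y q)) := by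
    intro q
    rw [hu, hu, Quaternion.star_smul, smul_mul_assoc, mul_smul_comm, smul_mul_assoc,
      smul_mul_assoc, smul_smul, mul_assoc]
  rw [Finset.sum_congr rfl fun q _ => congrArg (2 • ·) (step q)]
  simp only [← Finset.smul_sum, ← Finset.mul_sum, key, smul_smul]
  rw [Quaternion.mul_coe_eq_smul, smul_smul]
  rw [← Nat.cast_smul_eq_nsmul ℝ, smul_smul]
  have hc : ((2 : ℕ) : ℝ) * (d⁻¹ * d⁻¹ * (d ^ 2 / 2)) = 1 := by
    field_simp
    ring
  rw [hc, one_smul, sub_sub_cancel]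
end
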